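/- Let μ be a weighted partition of n (a multiset of pairs (mᵢ, δᵢ) with Σ mᵢ = n), decomposed as a disjoint union of nonempty sub-multisets π⁽¹⁾,…,π⁽ᵏ⁾. If for each k one has η_k − 1 = Σ_j (π⁽ᵏ⁾_j − 1) for positive integers η₁,…,η_k with Σ η_k = n, and the largest part of μ (in the size order) lies in π⁽ᵏ⁰⁾, then either η_{k₀} > μ₁ (the largest part of μ), or η_{k₀} = μ₁ and every other pair of π⁽ᵏ⁰⁾ has first coordinate 1. -/

import Mathlib

/-!
Splitting off the part `p` from the block containing it, the dimension constraint reads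
`η k₀ = p.1 + Σ_{q ≠ p} (q.1 - 1)`. All summands are natural numbers, so `η k₀ ≥ p.1`,
and since all parts are positive, equality holds exactly when every other part of the block
has first coordinate `1`.
-/

namespace Multiset

variable {α : Type*}

theorem sum_map_sub_one_eq_zero_iff_forall_eq_one {s : Multiset α} {f : α → ℕ}
    (hpos : ∀ a ∈ s, 0 < f a) :
    (s.map fun a => f a - 1).sum = 0 ↔ ∀ a ∈ s, f a = 1 := by
  simp only [sum_eq_zero_iff, mem_map, forall_exists_index, and_imp, forall_apply_eq_imp_iff₂]
  exact forall₂_congr fun a ha => by have := hpos a ha; omega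

variable [DecidableEq α]

theorem eq_add_sum_map_sub_one_erase {s : Multiset α} {f : α → ℕ} {e : ℕ} {a : α}
    (ha : a ∈ s) (hpos : ∀ b ∈ s, 0 < f b) (he : 0 < e)
    (hdim : e - 1 = (s.map fun b => f b - 1).sum) :
    e = f a + ((s.erase a).map fun b => f b - 1).sum := by
  rw [← sum_map_erase ha] at hdim
  have := hpos a ha
  omega

theorem lt_or_eq_and_forall_erase_eq_one {s : Multiset α} {f : α → ℕ} {e : ℕ} {a : α}
    (ha : a ∈ s) (hpos : ∀ b ∈ s, 0 < f b) (he : 0 < e)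
    (hdim : e - 1 = (s.map fun b => f b - 1).sum) :
    f a < e ∨ (e = f a ∧ ∀ b ∈ s.erase a, f b = 1) := by
  have hsplit := eq_add_sum_map_sub_one_erase ha hpos he hdim
  rcases Nat.eq_zero_or_pos ((s.erase a).map fun b => f b - 1).sum with hzero | hrest_pos
  · refine Or.inr ⟨by omega, ?_⟩
    exact (sum_map_sub_one_eq_zero_iff_forall_eq_one
      fun b hb => hpos b (mem_of_mem_erase hb)).mp hzero
  · exact Or.inl (by omega)

end Multiset

theorem weighted_partition_dichotomy_general
    (W : Type) [DecidableEq W] (K : ℕ)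
    (μ : Multiset (ℕ × W)) (π : Fin K → Multiset (ℕ × W)) (η : Fin K → ℕ)
    (hpos : ∀ p ∈ μ, 0 < p.1)
    (hdecomp : μ = ∑ k, π k)
    (hηpos : ∀ k, 0 < η k)
    (hdim : ∀ k, η k - 1 = ((π k).map (fun p => p.1 - 1)).sum)
    (k₀ : Fin K) (p : ℕ × W) (hp : p ∈ π k₀) :
    η k₀ > p.1 ∨ (η k₀ = p.1 ∧ ∀ q ∈ (π k₀).erase p, q.1 = 1) := by
  have hle : π k₀ ≤ μ :=
    hdecomp ▸ Finset.single_le_sum (fun _ _ => zero_le) (Finset.mem_univ k₀)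
  exact Multiset.lt_or_eq_and_forall_erase_eq_one hp
    (fun q hq => hpos q (Multiset.mem_of_le hle hq)) (hηpos k₀) (hdim k₀)

/-- the combinatorial dichotomy from the proof of Relation 1 in
Maulik–Pandharipande. Let `μ` be a weighted partition of `n` (a multiset of
pairs `(m, δ)` with the `m`'s positive and summing to `n`), decomposed as a
disjoint union of nonempty sub-multisets `π k`. Suppose `η k − 1 = Σ_{j ∈ π k}
(π k)_j − 1` for positive integers `η k` summing to `n`, and the largest part
`p` of `μ` (in the size order; in particular `p.1` is the maximal first
coordinate) lies in `π k₀`. Then either `η k₀ > p.1`, or `η k₀ = p.1` and every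
other pair of `π k₀` has first coordinate `1`. -/
theorem weighted_partition_dichotomy
    (W : Type) [DecidableEq W] (deg : W → ℕ) (n K : ℕ) (hK : 0 < K)
    (μ : Multiset (ℕ × W)) (π : Fin K → Multiset (ℕ × W)) (η : Fin K → ℕ)
    (hpos : ∀ p ∈ μ, 0 < p.1)
    (hsum : (μ.map Prod.fst).sum = n)
    (hdecomp : μ = ∑ k, π k)
    (hne : ∀ k, π k ≠ 0)
    (hηpos : ∀ k, 0 < η k)
    (hηsum : ∑ k, η k = n)
    (hdim : ∀ k, η k - 1 = ((π k).map (fun p => p.1 - 1)).sum)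
    (k₀ : Fin K) (p : ℕ × W) (hp : p ∈ π k₀)
    (hmax : ∀ q ∈ μ, q.1 ≤ p.1) :
    η k₀ > p.1 ∨ (η k₀ = p.1 ∧ ∀ q ∈ (π k₀).erase p, q.1 = 1) :=
  weighted_partition_dichotomy_general W K μ π η hpos hdecomp hηpos hdim k₀ p hp
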